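/- Cross-ratio realization: let ξ, ξ̂ be lightlike with (ξ,ξ̂) = −1, and let η = ξ + y + ½(y,y)ξ̂ and ζ = ξ + z + ½(z,z)ξ̂ be Euclidean lifts with y, z ∈ ⟨ξ,ξ̂⟩^⊥ ≅ ℝⁿ. Then the Clifford cross ratio y⁻¹z equals r ∈ ℝ if and only if ζ = r·Γ_{⟨ξ⟩}^{⟨ξ̂⟩}(r)(η); in particular ⟨ζ⟩ = ⟨Γ_{⟨ξ⟩}^{⟨ξ̂⟩}(r)η⟩. -/

import Mathlib

noncomputable section
open CliffordAlgebra

/-- Euclidean n-space. -/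
abbrev E (n : ℕ) := EuclideanSpace ℝ (Fin n)

/-- The quadratic form of the standard inner product on ℝⁿ. -/
def QE (n : ℕ) : QuadraticForm ℝ (E n) := LinearMap.BilinMap.toQuadraticMap (innerₗ (E n))

/-- The Clifford-algebra inverse of a vector: v⁻¹ = v / |v|². -/
def cinv {n : ℕ} (v : E n) : CliffordAlgebra (QE n) := (QE n v)⁻¹ • ι (QE n) v

/-- The Minkowski space ℝ^{n+1,1} modelled as ℝ·o ⊕ ℝⁿ ⊕ ℝ·q, a vector (a, v, b)
standing for a·o + v + b·q with o, q lightlike and (o,q) = −1. -/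
abbrev M (n : ℕ) := ℝ × E n × ℝ

/-- The Minkowski bilinear form of signature (n+1,1). -/
def BM (n : ℕ) : LinearMap.BilinForm ℝ (M n) :=
  LinearMap.mk₂ ℝ (fun u v => (inner ℝ u.2.1 v.2.1 : ℝ) - u.1 * v.2.2 - v.1 * u.2.2)
    (by intros; simp [inner_add_left]; ring)
    (by intros; simp [inner_smul_left]; ring)
    (by intros; simp [inner_add_right]; ring)
    (by intros; simp [inner_smul_right]; ring)

/-- The point at the origin o. -/
def oM (n : ℕ) : M n := (1, 0, 0)

/-- The point at infinity q. -/
def qM (n : ℕ) : M n := (0, 0, 1)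

/-- The Euclidean lift ξ = o + x + ½(x,x)q of x ∈ ℝⁿ into the light cone. -/
def lift {n : ℕ} (x : E n) : M n := (1, x, (inner ℝ x x : ℝ) / 2)

/-- The derivative of the Euclidean lift along a curve: ξ' = x' + (x,x')q. -/
def liftD {n : ℕ} (x dx : E n) : M n := (0, dx, (inner ℝ x dx : ℝ))

/-- The transformation Γ_{⟨ξ⟩}^{⟨ξ̂⟩}(r): multiplication by 1/r on ⟨ξ⟩, by 1 on
⟨ξ,ξ̂⟩^⊥ and by r on ⟨ξ̂⟩. -/
def Gamma {n : ℕ} (ξ ξh : M n) (r : ℝ) : M n →ₗ[ℝ] M n where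
  toFun y := y + (((1/r - 1) * BM n y ξh) / BM n ξ ξh) • ξ
    + (((r - 1) * BM n y ξ) / BM n ξ ξh) • ξh
  map_add' y z := by simp [mul_add, add_div, add_smul]; abel
  map_smul' c y := by simp [mul_div_assoc, mul_assoc, mul_smul]; module

/-!
Since `ι y * ι y = |y|²`, the vector `y` is invertible in the Clifford algebra with inverse
`y / |y|²`, so `y⁻¹ z = r` says `z = r y` once `ι` is known to be injective (it is, away from
characteristic two, through the linear isomorphism with the exterior algebra). On the Minkowski
side, with `ξ = o` and `ξ̂ = q`, `Γ(r)` rescales the `o`-, `ℝⁿ`- and `q`-coordinates by `1/r`, `1`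
and `r`, so `r Γ(r)` maps the lift of `y` to the lift of `r y`; lifts are injective.
-/

theorem CliffordAlgebra.ι_injective {R V : Type*} [CommRing R] [Invertible (2 : R)]
    [AddCommGroup V] [Module R V] (Q : QuadraticForm R V) : Function.Injective (ι Q) := by
  intro a b h
  have h' := congrArg (changeForm (changeForm.associated_neg_proof (Q := Q))) h
  rw [changeForm_ι, changeForm_ι] at h'
  exact (ExteriorAlgebra.ι_inj R a b).1 h'

theorem CliffordAlgebra.inv_smul_ι_mul_ι_eq_algebraMap_iff {K V : Type*} [Field K]
    [Invertible (2 : K)] [AddCommGroup V] [Module K V] {Q : QuadraticForm K V} {y : V}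
    (hy : Q y ≠ 0) (z : V) (r : K) :
    (Q y)⁻¹ • ι Q y * ι Q z = algebraMap K _ r ↔ z = r • y := by
  let _ := invertibleOfNonzero hy
  let _ := invertibleιOfInvertible Q y
  rw [← invOf_eq_inv, ← map_smul, ← invOf_ι, invOf_mul_eq_iff_eq_mul_left, ← Algebra.commutes,
    ← Algebra.smul_def, ← map_smul, (ι_injective Q).eq_iff]

lemma QE_apply {n : ℕ} (v : E n) : QE n v = inner ℝ v v := rfl

lemma QE_ne_zero {n : ℕ} {v : E n} (hv : v ≠ 0) : QE n v ≠ 0 := by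
  rwa [QE_apply, Ne, inner_self_eq_zero]

lemma cinv_mul_ι_eq_algebraMap_iff {n : ℕ} {y : E n} (hy : y ≠ 0) (z : E n) (r : ℝ) :
    cinv y * ι (QE n) z = algebraMap ℝ _ r ↔ z = r • y :=
  inv_smul_ι_mul_ι_eq_algebraMap_iff (QE_ne_zero hy) z r

lemma oM_add_add_smul_qM_eq_lift {n : ℕ} (x : E n) :
    oM n + ((0 : ℝ), x, (0 : ℝ)) + ((inner ℝ x x : ℝ) / 2) • qM n = lift x := by
  simp [oM, qM, _root_.lift]

lemma lift_injective {n : ℕ} : Function.Injective (lift (n := n)) :=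
  fun _ _ h => congrArg (fun u => u.2.1) h

lemma Gamma_oM_qM_apply {n : ℕ} (r a b : ℝ) (v : E n) :
    Gamma (oM n) (qM n) r (a, v, b) = (a / r, v, r * b) := by
  ext <;> simp [Gamma, BM, oM, qM] <;> ring

lemma smul_Gamma_oM_qM_lift {n : ℕ} {r : ℝ} (hr : r ≠ 0) (x : E n) :
    r • Gamma (oM n) (qM n) r (lift x) = lift (r • x) := by
  rw [_root_.lift, Gamma_oM_qM_apply, _root_.lift, real_inner_smul_left, real_inner_smul_right]
  ext <;> simp only [Prod.smul_fst, Prod.smul_snd, smul_eq_mul]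
  · field_simp
  · ring

theorem cross_ratio_realization_general {n : ℕ} (y z : E n) (hy : y ≠ 0)
    (r : ℝ) (hr : r ≠ 0)
    (η ζ : M n)
    (hη : η = oM n + ((0 : ℝ), y, (0 : ℝ)) + ((inner ℝ y y : ℝ) / 2) • qM n)
    (hζ : ζ = oM n + ((0 : ℝ), z, (0 : ℝ)) + ((inner ℝ z z : ℝ) / 2) • qM n) :
    ((cinv y * ι (QE n) z = algebraMap ℝ _ r) ↔ ζ = r • Gamma (oM n) (qM n) r η)
    ∧ ((cinv y * ι (QE n) z = algebraMap ℝ _ r) →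
        ∃ c : ℝ, c ≠ 0 ∧ Gamma (oM n) (qM n) r η = c • ζ) := by
  rw [oM_add_add_smul_qM_eq_lift] at hη hζ
  subst hη hζ
  have hiff : cinv y * ι (QE n) z = algebraMap ℝ _ r ↔
      lift z = r • Gamma (oM n) (qM n) r (lift y) := by
    rw [cinv_mul_ι_eq_algebraMap_iff hy, smul_Gamma_oM_qM_lift hr, lift_injective.eq_iff]
  refine ⟨hiff, fun h => ⟨r⁻¹, inv_ne_zero hr, ?_⟩⟩
  rw [hiff.1 h, inv_smul_smul₀ hr]

/-- cross-ratio realization. For Euclidean lifts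
η = ξ + y + ½(y,y)ξ̂ and ζ = ξ + z + ½(z,z)ξ̂ (here ξ = o, ξ̂ = q), the Clifford cross
ratio y⁻¹z equals r ∈ ℝ iff ζ = r·Γ_{⟨ξ⟩}^{⟨ξ̂⟩}(r)(η); in particular
⟨ζ⟩ = ⟨Γ_{⟨ξ⟩}^{⟨ξ̂⟩}(r)η⟩. -/
theorem cross_ratio_realization {n : ℕ} (y z : E n) (hy : y ≠ 0) (hz : z ≠ 0)
    (r : ℝ) (hr : r ≠ 0)
    (η ζ : M n)
    (hη : η = oM n + ((0 : ℝ), y, (0 : ℝ)) + ((inner ℝ y y : ℝ) / 2) • qM n)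
    (hζ : ζ = oM n + ((0 : ℝ), z, (0 : ℝ)) + ((inner ℝ z z : ℝ) / 2) • qM n) :
    ((cinv y * ι (QE n) z = algebraMap ℝ _ r) ↔ ζ = r • Gamma (oM n) (qM n) r η)
    ∧ ((cinv y * ι (QE n) z = algebraMap ℝ _ r) →
        ∃ c : ℝ, c ≠ 0 ∧ Gamma (oM n) (qM n) r η = c • ζ) :=
  cross_ratio_realization_general y z hy r hr η ζ hη hζ
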